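/- Let η be a real random variable with E[η⁴] < ∞, E[η] = E[η³] = 0, and E[η²] = 1, and let F : ℝ → ℝ be three times continuously differentiable with bounded third derivative. Then E[η·F(η)] − E[η²]·E[F′(η)] = E[(η⁴/6)·F⁽³⁾(ξ₁)] − E[η²]·E[(η²/2)·F⁽³⁾(ξ₂)] for some (random) ξ₁, ξ₂ lying between 0 and η; in particular |E[η·F(η)] − E[F′(η)]| ≤ (E[η⁴]/6 + 1/2)·sup|F⁽³⁾|. -/

import Mathlib

/-!
Expand `F` to third order and `F'` to second order around `0` with Lagrange remainders. Once
integrated, the moment conditions `E[η] = E[η³] = 0`, `E[η²] = 1` reduce both Taylor polynomials,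
that of `η F(η)` and that of `F'(η)`, to the same constant `F'(0)`. So the difference is the
difference of the two remainder terms, each of which is controlled by `sup |F⁽³⁾|`.
-/

open MeasureTheory Real

section Taylor

open Set Finset

theorem exists_taylor_lagrange_at_zero {f : ℝ → ℝ} {n : ℕ} (hf : ContDiff ℝ (n + 1) f)
    (x : ℝ) :
    ∃ ξ ∈ uIcc 0 x, f x = ∑ k ∈ range (n + 1), iteratedDeriv k f 0 * x ^ k / k.factorial
      + iteratedDeriv (n + 1) f ξ * x ^ (n + 1) / (n + 1).factorial := by
  rcases eq_or_ne x 0 with rfl | hx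
  · refine ⟨0, by simp, ?_⟩
    rw [Finset.sum_eq_single 0 (fun k _ hk => by simp [hk]) (by simp)]
    simp
  obtain ⟨ξ, hξ, hrem⟩ := taylor_mean_remainder_lagrange_iteratedDeriv hx.symm hf.contDiffOn
  have hpoly : taylorWithinEval f n (uIcc 0 x) 0 x
      = ∑ k ∈ range (n + 1), iteratedDeriv k f 0 * x ^ k / k.factorial := by
    rw [taylor_within_apply]
    refine Finset.sum_congr rfl fun k hk => ?_
    rw [iteratedDerivWithin_eq_iteratedDeriv (uniqueDiffOn_uIcc hx.symm) (hf.contDiffAt.of_le ?_)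
      left_mem_uIcc, smul_eq_mul, sub_zero]
    · ring
    · exact_mod_cast (Finset.mem_range.mp hk).le
  rw [hpoly, sub_zero] at hrem
  exact ⟨ξ, uIoo_subset_uIcc_self hξ, by linarith⟩

theorem exists_taylor_lagrange_three {F : ℝ → ℝ} (hF : ContDiff ℝ 3 F) (x : ℝ) :
    ∃ ξ ∈ uIcc 0 x, F x = F 0 + deriv F 0 * x + iteratedDeriv 2 F 0 / 2 * x ^ 2
      + iteratedDeriv 3 F ξ * x ^ 3 / 6 := by
  obtain ⟨ξ, hξ, h⟩ := exists_taylor_lagrange_at_zero (n := 2) hF x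
  refine ⟨ξ, hξ, ?_⟩
  simp only [h, Finset.sum_range_succ, Finset.sum_range_zero, iteratedDeriv_zero,
    iteratedDeriv_one, Nat.factorial]
  push_cast
  ring

theorem exists_deriv_taylor_lagrange_two {F : ℝ → ℝ} (hF : ContDiff ℝ 3 F) (x : ℝ) :
    ∃ ξ ∈ uIcc 0 x, deriv F x = deriv F 0 + iteratedDeriv 2 F 0 * x
      + iteratedDeriv 3 F ξ * x ^ 2 / 2 := by
  obtain ⟨ξ, hξ, h⟩ := exists_taylor_lagrange_at_zero (n := 1) (hF.deriv' (n := 2)) x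
  exact ⟨ξ, hξ, by simp [h, Finset.sum_range_succ, ← iteratedDeriv_succ']⟩

end Taylor

section Moments

variable {Ω : Type*} [MeasurableSpace Ω] {μ : Measure Ω}

theorem MeasureTheory.Integrable.pow_of_le_of_even [IsFiniteMeasure μ] {X : Ω → ℝ}
    {p q : ℕ} (hint : Integrable (fun ω => X ω ^ q) μ) (hX : AEStronglyMeasurable X μ)
    (hpq : p ≤ q) (hq : Even q) :
    Integrable (fun ω => X ω ^ p) μ := by
  have hnorm : Integrable (fun ω => ‖X ω‖ ^ p) μ :=
    integrable_norm_pow_of_le hX hpq (by simpa [Real.norm_eq_abs, hq.pow_abs] using hint)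
  exact (integrable_norm_iff (hX.pow p)).mp (by simpa [norm_pow] using hnorm)

theorem abs_integral_mul_le_integral_mul {g h : Ω → ℝ} {M : ℝ} (hg : Integrable g μ)
    (hg0 : ∀ ω, 0 ≤ g ω) (hh : ∀ ω, |h ω| ≤ M) :
    |∫ ω, g ω * h ω ∂μ| ≤ (∫ ω, g ω ∂μ) * M := by
  rw [← integral_mul_const M, ← Real.norm_eq_abs]
  refine norm_integral_le_of_norm_le (hg.mul_const M) (Filter.Eventually.of_forall fun ω => ?_)
  rw [norm_mul, Real.norm_of_nonneg (hg0 ω)]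
  exact mul_le_mul_of_nonneg_left (hh ω) (hg0 ω)

variable [IsProbabilityMeasure μ] {η : Ω → ℝ}

theorem integral_remainder_of_eq_cubic_add (hη : AEStronglyMeasurable η μ)
    (h4 : Integrable (fun ω => η ω ^ 4) μ) (hmean : ∫ ω, η ω ∂μ = 0)
    (h2 : ∫ ω, η ω ^ 2 ∂μ = 1) (h3 : ∫ ω, η ω ^ 3 ∂μ = 0)
    {g r : Ω → ℝ} (hg : Integrable g μ) {a b c d : ℝ}
    (hgr : ∀ ω, g ω = a + b * η ω + c * η ω ^ 2 + d * η ω ^ 3 + r ω) :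
    ∫ ω, r ω ∂μ = ∫ ω, g ω ∂μ - (a + c) := by
  have i1 : Integrable (fun ω => b * η ω) μ := by
    simpa using (h4.pow_of_le_of_even hη (p := 1) (by norm_num) ⟨2, rfl⟩).const_mul b
  have i2 := (h4.pow_of_le_of_even hη (p := 2) (by norm_num) ⟨2, rfl⟩).const_mul c
  have i3 := (h4.pow_of_le_of_even hη (p := 3) (by norm_num) ⟨2, rfl⟩).const_mul d
  have i01 : Integrable (fun ω => a + b * η ω) μ := (integrable_const a).add i1
  have i012 : Integrable (fun ω => a + b * η ω + c * η ω ^ 2) μ := i01.add i2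
  have i0123 : Integrable (fun ω => a + b * η ω + c * η ω ^ 2 + d * η ω ^ 3) μ :=
    i012.add i3
  have hr : r = fun ω => g ω - (a + b * η ω + c * η ω ^ 2 + d * η ω ^ 3) := by
    funext ω
    linarith [hgr ω]
  rw [hr, integral_sub hg i0123, integral_add i012 i3, integral_add i01 i2,
    integral_add (integrable_const a) i1, integral_const_mul, integral_const_mul,
    integral_const_mul, hmean, h2, h3]
  simp

end Moments

/-- Non-Gaussian integration by parts. -/
theorem nongaussian_integration_by_parts
    {Ω : Type*} [MeasurableSpace Ω] (μ : Measure Ω) [IsProbabilityMeasure μ]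
    (η : Ω → ℝ) (hη : Measurable η)
    (h4 : Integrable (fun ω => (η ω) ^ 4) μ)
    (hmean : ∫ ω, η ω ∂μ = 0) (h3 : ∫ ω, (η ω) ^ 3 ∂μ = 0)
    (h2 : ∫ ω, (η ω) ^ 2 ∂μ = 1)
    (F : ℝ → ℝ) (hF : ContDiff ℝ 3 F) (M : ℝ)
    (hM : ∀ x, |iteratedDeriv 3 F x| ≤ M)
    (hint1 : Integrable (fun ω => η ω * F (η ω)) μ)
    (hint2 : Integrable (fun ω => deriv F (η ω)) μ) :
    (∃ ξ₁ ξ₂ : Ω → ℝ,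
      (∀ ω, ξ₁ ω ∈ Set.uIcc 0 (η ω)) ∧ (∀ ω, ξ₂ ω ∈ Set.uIcc 0 (η ω)) ∧
      (∫ ω, η ω * F (η ω) ∂μ) - (∫ ω, (η ω) ^ 2 ∂μ) * (∫ ω, deriv F (η ω) ∂μ)
        = (∫ ω, (η ω) ^ 4 / 6 * iteratedDeriv 3 F (ξ₁ ω) ∂μ)
          - (∫ ω, (η ω) ^ 2 ∂μ) * (∫ ω, (η ω) ^ 2 / 2 * iteratedDeriv 3 F (ξ₂ ω) ∂μ)) ∧
    |(∫ ω, η ω * F (η ω) ∂μ) - ∫ ω, deriv F (η ω) ∂μ|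
      ≤ ((∫ ω, (η ω) ^ 4 ∂μ) / 6 + 1 / 2) * M := by
  choose ξ₁ hξ₁ hF_taylor using fun ω => exists_taylor_lagrange_three hF (η ω)
  choose ξ₂ hξ₂ hF'_taylor using fun ω => exists_deriv_taylor_lagrange_two hF (η ω)
  have hR₁ := integral_remainder_of_eq_cubic_add hη.aestronglyMeasurable h4 hmean h2 h3 hint1
    (r := fun ω => η ω ^ 4 / 6 * iteratedDeriv 3 F (ξ₁ ω))
    (a := 0) (b := F 0) (c := deriv F 0) (d := iteratedDeriv 2 F 0 / 2)
    fun ω => by linear_combination η ω * hF_taylor ω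
  have hR₂ := integral_remainder_of_eq_cubic_add hη.aestronglyMeasurable h4 hmean h2 h3 hint2
    (r := fun ω => η ω ^ 2 / 2 * iteratedDeriv 3 F (ξ₂ ω))
    (a := deriv F 0) (b := iteratedDeriv 2 F 0) (c := 0) (d := 0)
    fun ω => by linear_combination hF'_taylor ω
  have hdiff : (∫ ω, η ω * F (η ω) ∂μ) - ∫ ω, deriv F (η ω) ∂μ
      = (∫ ω, η ω ^ 4 / 6 * iteratedDeriv 3 F (ξ₁ ω) ∂μ)
        - ∫ ω, η ω ^ 2 / 2 * iteratedDeriv 3 F (ξ₂ ω) ∂μ := by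
    rw [hR₁, hR₂]; ring
  refine ⟨⟨ξ₁, ξ₂, hξ₁, hξ₂, by rw [h2, one_mul, one_mul, hdiff]⟩, ?_⟩
  have hb₁ := abs_integral_mul_le_integral_mul (h4.div_const 6) (fun ω => by positivity)
    (fun ω => hM (ξ₁ ω))
  have hb₂ := abs_integral_mul_le_integral_mul
    ((h4.pow_of_le_of_even hη.aestronglyMeasurable (p := 2) (by norm_num) ⟨2, rfl⟩).div_const 2)
    (fun ω => by positivity) (fun ω => hM (ξ₂ ω))
  rw [integral_div] at hb₁ hb₂
  rw [h2] at hb₂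
  rw [hdiff, add_mul]
  exact (abs_sub _ _).trans (add_le_add hb₁ hb₂)
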